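/- arXiv:1912.01445 — 4 statements merged into one kernel-verified Lean document; each statement's English description precedes it below -/
import Mathlib

section
/- For every nonnegative integer k, the sum over j from 0 to k of binom(2j,j)*binom(2k-2j,k-j)*(6j+1)*(6k-6j+1) equals 4^k * (9k^2 + 3k + 2) / 2. -/
/-!
Write `c n` for the central binomial coefficient, so that `(n + 1) c (n + 1) = 2 (2n + 1) c n`.
Over the antidiagonal `i + j = n`, this recurrence turns the weighted convolutions
`A n = ∑ c i c j`, `B n = ∑ i c i c j` and `U n = ∑ i j c i c j` into one another at index `n + 1`,
while the symmetry `i ↔ j` gives `2 B n = n A n`. This yields `A n = 4 ^ n`, `2 B n = n 4 ^ n` and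
`8 U n = n (n - 1) 4 ^ n`, and the summand of the theorem is `(36 i j + 6 i + 6 j + 1) c i c j`.
-/

open Finset

namespace Nat

theorem two_mul_sum_antidiagonal_fst_mul {R : Type*} [CommSemiring R] (f : ℕ → R) (n : ℕ) :
    2 * ∑ p ∈ antidiagonal n, (p.1 : R) * f p.1 * f p.2
      = n * ∑ p ∈ antidiagonal n, f p.1 * f p.2 := by
  have hswap : ∑ p ∈ antidiagonal n, (p.1 : R) * f p.1 * f p.2
      = ∑ p ∈ antidiagonal n, (p.2 : R) * f p.1 * f p.2 := by
    rw [← Finset.Nat.sum_antidiagonal_swap]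
    exact sum_congr rfl fun p _ => by simp only [Prod.fst_swap, Prod.snd_swap]; ring
  calc 2 * ∑ p ∈ antidiagonal n, (p.1 : R) * f p.1 * f p.2
      = ∑ p ∈ antidiagonal n, ((p.1 : R) * f p.1 * f p.2 + (p.2 : R) * f p.1 * f p.2) := by
        rw [two_mul, sum_add_distrib, ← hswap]
    _ = n * ∑ p ∈ antidiagonal n, f p.1 * f p.2 := by
        rw [mul_sum]
        refine sum_congr rfl fun p hp => ?_
        rw [← mem_antidiagonal.mp hp, Nat.cast_add]
        ring

theorem sum_antidiagonal_succ_fst_mul_centralBinom (g : ℕ → ℕ) (n : ℕ) :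
    ∑ p ∈ antidiagonal (n + 1), p.1 * centralBinom p.1 * g p.2
      = ∑ p ∈ antidiagonal n, 2 * (2 * p.1 + 1) * centralBinom p.1 * g p.2 := by
  rw [Finset.Nat.sum_antidiagonal_succ, zero_mul, zero_mul, zero_add]
  exact sum_congr rfl fun p _ => by rw [succ_mul_centralBinom_succ]

theorem sum_antidiagonal_centralBinom_mul (n : ℕ) :
    ∑ p ∈ antidiagonal n, centralBinom p.1 * centralBinom p.2 = 4 ^ n := by
  induction n with
  | zero => simp
  | succ n ih =>
    have hB := two_mul_sum_antidiagonal_fst_mul centralBinom n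
    have hB_succ := two_mul_sum_antidiagonal_fst_mul centralBinom (n + 1)
    simp only [Nat.cast_id] at hB hB_succ
    refine Nat.eq_of_mul_eq_mul_left (add_one_pos n) ?_
    calc (n + 1) * ∑ p ∈ antidiagonal (n + 1), centralBinom p.1 * centralBinom p.2
        = 2 * ∑ p ∈ antidiagonal n, 2 * (2 * p.1 + 1) * centralBinom p.1 * centralBinom p.2 := by
          rw [← hB_succ, sum_antidiagonal_succ_fst_mul_centralBinom]
      _ = 4 * (2 * ∑ p ∈ antidiagonal n, p.1 * centralBinom p.1 * centralBinom p.2)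
          + 4 * ∑ p ∈ antidiagonal n, centralBinom p.1 * centralBinom p.2 := by
          rw [mul_sum, mul_sum, mul_sum, mul_sum, ← sum_add_distrib]
          exact sum_congr rfl fun p _ => by ring
      _ = (n + 1) * 4 ^ (n + 1) := by
          rw [hB, ih]
          ring

theorem two_mul_sum_antidiagonal_fst_mul_centralBinom_mul (n : ℕ) :
    2 * ∑ p ∈ antidiagonal n, p.1 * centralBinom p.1 * centralBinom p.2 = n * 4 ^ n := by
  simpa only [Nat.cast_id, sum_antidiagonal_centralBinom_mul] using
    two_mul_sum_antidiagonal_fst_mul centralBinom n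

theorem sum_antidiagonal_centralBinom_mul_snd_mul (n : ℕ) :
    ∑ p ∈ antidiagonal n, centralBinom p.1 * (p.2 * centralBinom p.2)
      = ∑ p ∈ antidiagonal n, p.1 * centralBinom p.1 * centralBinom p.2 := by
  rw [← Finset.Nat.sum_antidiagonal_swap]
  exact sum_congr rfl fun p _ => by simp only [Prod.fst_swap, Prod.snd_swap]; ring

theorem eight_mul_sum_antidiagonal_fst_mul_centralBinom_mul_snd_mul (n : ℕ) :
    8 * ∑ p ∈ antidiagonal n, p.1 * centralBinom p.1 * (p.2 * centralBinom p.2)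
      = n * (n - 1) * 4 ^ n := by
  induction n with
  | zero => simp
  | succ n ih =>
    have hsplit :
        ∑ p ∈ antidiagonal n, 2 * (2 * p.1 + 1) * centralBinom p.1 * (p.2 * centralBinom p.2)
          = 4 * ∑ p ∈ antidiagonal n, p.1 * centralBinom p.1 * (p.2 * centralBinom p.2)
          + 2 * ∑ p ∈ antidiagonal n, centralBinom p.1 * (p.2 * centralBinom p.2) := by
      rw [mul_sum, mul_sum, ← sum_add_distrib]
      exact sum_congr rfl fun p _ => by ring
    have hB := two_mul_sum_antidiagonal_fst_mul_centralBinom_mul n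
    rw [sum_antidiagonal_succ_fst_mul_centralBinom (fun j => j * centralBinom j), hsplit,
      sum_antidiagonal_centralBinom_mul_snd_mul]
    rcases n with _ | n
    · simp
    · rw [add_tsub_cancel_right] at ih ⊢
      linear_combination 4 * ih + 8 * hB

theorem two_mul_sum_antidiagonal_centralBinom_mul_six_mul_add_one (n : ℕ) :
    2 * ∑ p ∈ antidiagonal n,
        centralBinom p.1 * centralBinom p.2 * (6 * p.1 + 1) * (6 * p.2 + 1)
      = 4 ^ n * (9 * n ^ 2 + 3 * n + 2) := by
  have hexpand : ∑ p ∈ antidiagonal n,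
        centralBinom p.1 * centralBinom p.2 * (6 * p.1 + 1) * (6 * p.2 + 1)
      = 36 * ∑ p ∈ antidiagonal n, p.1 * centralBinom p.1 * (p.2 * centralBinom p.2)
        + 6 * ∑ p ∈ antidiagonal n, p.1 * centralBinom p.1 * centralBinom p.2
        + 6 * ∑ p ∈ antidiagonal n, centralBinom p.1 * (p.2 * centralBinom p.2)
        + ∑ p ∈ antidiagonal n, centralBinom p.1 * centralBinom p.2 := by
    simp only [mul_sum, ← sum_add_distrib]
    exact sum_congr rfl fun p _ => by ring
  have hU := eight_mul_sum_antidiagonal_fst_mul_centralBinom_mul_snd_mul n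
  have hB := two_mul_sum_antidiagonal_fst_mul_centralBinom_mul n
  rw [hexpand, sum_antidiagonal_centralBinom_mul_snd_mul, sum_antidiagonal_centralBinom_mul]
  rcases n with _ | n
  · simp
  · rw [add_tsub_cancel_right] at hU
    linear_combination 9 * hU + 12 * hB

end Nat

theorem stmt_2 (k : ℕ) :
    (∑ j ∈ Finset.range (k + 1),
      ((2 * j).choose j : ℚ) * (2 * (k - j)).choose (k - j) * (6 * j + 1) * (6 * (k - j : ℕ) + 1))
      = 4 ^ k * (9 * k ^ 2 + 3 * k + 2) / 2 := by
  rw [← Finset.Nat.sum_antidiagonal_eq_sum_range_succ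
    (fun i j => ((2 * i).choose i : ℚ) * (2 * j).choose j * (6 * i + 1) * (6 * j + 1))]
  have h := congrArg (Nat.cast : ℕ → ℚ)
    (Nat.two_mul_sum_antidiagonal_centralBinom_mul_six_mul_add_one k)
  push_cast [Nat.centralBinom] at h
  linarith
end

section
/- For every odd prime p, the sum over k from 0 to p-1 of (-1/8)^k * (sum over j from 0 to k of binom(2j,j)*binom(2k-2j,k-j)*(6j+1)*(6k-6j+1)) is congruent to -p/2 modulo p^2, i.e., the rational number (LHS + p/2)/p^2 has denominator coprime to p. -/
/-!
Writing `C(2k,k) = (-4)^k binom(-1/2, k)` and `(2k+1) C(2k,k) = (-4)^k binom(-3/2, k)`, the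
Chu–Vandermonde identity evaluates the convolutions of central binomial coefficients, and
`(6j+1)(6(k-j)+1) = 36 j(k-j) + 6k + 1` turns the inner sum into `4^k (9k² + 3k + 2) / 2`.
The outer sum is then `-(-1/2)^p p (3p-1) = p (3p-1) / 2^p`, so the quotient in
question is `(3p - 1 + 2^(p-1)) / (p 2^p)`, which by Fermat's little theorem is an integer
divided by `2^p`.
-/

open Finset

namespace Ring

variable {K : Type*} [Field K] [CharZero K]

open Polynomial in
theorem choose_succ_right_eq (r : K) (k : ℕ) :
    choose r (k + 1) * (k + 1) = choose r k * (r - k) := by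
  have h := descPochhammer_eq_factorial_smul_choose r (k + 1)
  rw [descPochhammer_succ_right, smeval_mul, descPochhammer_eq_factorial_smul_choose, smeval_sub,
    smeval_X, smeval_natCast, Nat.factorial_succ] at h
  simp only [nsmul_eq_mul, pow_one, pow_zero, Nat.cast_mul, Nat.cast_add, Nat.cast_one,
    mul_one] at h
  apply mul_left_cancel₀ (Nat.cast_ne_zero.mpr k.factorial_ne_zero : (k.factorial : K) ≠ 0)
  linear_combination -h

theorem choose_neg_one (k : ℕ) : choose (-1 : K) k = (-1) ^ k := by
  induction k with
  | zero => simp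
  | succ k ih =>
    apply mul_right_cancel₀ (Nat.cast_add_one_ne_zero k : (k : K) + 1 ≠ 0)
    rw [choose_succ_right_eq, ih]
    ring

theorem choose_neg_three (k : ℕ) : choose (-3 : K) k = (-1) ^ k * ((k + 1) * (k + 2) / 2) := by
  induction k with
  | zero => simp
  | succ k ih =>
    apply mul_right_cancel₀ (Nat.cast_add_one_ne_zero k : (k : K) + 1 ≠ 0)
    rw [choose_succ_right_eq, ih]
    push_cast
    ring

theorem pow_mul_add_choose_eq (c r s : K) (n : ℕ) :
    c ^ n * choose (r + s) n =
      ∑ ij ∈ antidiagonal n, c ^ ij.1 * choose r ij.1 * (c ^ ij.2 * choose s ij.2) := by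
  rw [add_choose_eq n (Commute.all r s), mul_sum]
  refine sum_congr rfl fun ij hij => ?_
  rw [← mem_antidiagonal.mp hij, pow_add]
  ring

end Ring

namespace Nat

variable {K : Type*} [Field K] [CharZero K]

theorem centralBinom_eq_neg_four_pow_mul_choose (k : ℕ) :
    (k.centralBinom : K) = (-4) ^ k * Ring.choose (-1 / 2 : K) k := by
  induction k with
  | zero => simp
  | succ k ih =>
    have h := Ring.choose_succ_right_eq (-1 / 2 : K) k
    have hc : ((k + 1 : ℕ) : K) * (k + 1).centralBinom = 2 * (2 * k + 1) * k.centralBinom := by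
      exact_mod_cast succ_mul_centralBinom_succ k
    apply mul_left_cancel₀ (Nat.cast_add_one_ne_zero k : (k : K) + 1 ≠ 0)
    push_cast at hc ⊢
    linear_combination hc + 2 * (2 * (k : K) + 1) * ih + 4 * (-4 : K) ^ k * h

theorem two_mul_add_one_mul_centralBinom_eq_neg_four_pow_mul_choose (k : ℕ) :
    ((2 * k + 1) * k.centralBinom : K) = (-4) ^ k * Ring.choose (-3 / 2 : K) k := by
  induction k with
  | zero => simp
  | succ k ih =>
    have h := Ring.choose_succ_right_eq (-3 / 2 : K) k
    have hc : ((k + 1 : ℕ) : K) * (k + 1).centralBinom = 2 * (2 * k + 1) * k.centralBinom := by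
      exact_mod_cast succ_mul_centralBinom_succ k
    apply mul_left_cancel₀ (Nat.cast_add_one_ne_zero k : (k : K) + 1 ≠ 0)
    push_cast at hc ⊢
    linear_combination (2 * (k : K) + 3) * hc + 2 * (2 * (k : K) + 3) * ih + 4 * (-4 : K) ^ k * h

theorem sum_antidiagonal_centralBinom_mul_centralBinom (n : ℕ) :
    ∑ ij ∈ antidiagonal n, (ij.1.centralBinom * ij.2.centralBinom : K) = 4 ^ n := by
  simp only [centralBinom_eq_neg_four_pow_mul_choose (K := K)]
  rw [← Ring.pow_mul_add_choose_eq, show (-1 / 2 + -1 / 2 : K) = -1 by ring, Ring.choose_neg_one,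
    ← mul_pow]
  norm_num

theorem sum_antidiagonal_two_mul_add_one_mul_centralBinom (n : ℕ) :
    ∑ ij ∈ antidiagonal n,
        ((2 * ij.1 + 1) * ij.1.centralBinom * ((2 * ij.2 + 1) * ij.2.centralBinom) : K) =
      4 ^ n * ((n + 1) * (n + 2) / 2) := by
  simp only [two_mul_add_one_mul_centralBinom_eq_neg_four_pow_mul_choose (K := K)]
  rw [← Ring.pow_mul_add_choose_eq, show (-3 / 2 + -3 / 2 : K) = -3 by ring,
    Ring.choose_neg_three, ← mul_assoc, ← mul_pow]
  norm_num

theorem sum_antidiagonal_mul_centralBinom_mul_mul_centralBinom (n : ℕ) :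
    ∑ ij ∈ antidiagonal n, (ij.1 * ij.1.centralBinom * (ij.2 * ij.2.centralBinom) : K) =
      4 ^ n * (n * (n - 1) / 8) := by
  rcases n with _ | _ | n
  · simp
  · simp [Finset.Nat.sum_antidiagonal_succ]
  rw [Finset.Nat.sum_antidiagonal_succ, Finset.Nat.sum_antidiagonal_succ']
  have hc (k : ℕ) :
      ((k + 1 : ℕ) * (k + 1).centralBinom : K) = 2 * ((2 * k + 1) * k.centralBinom) := by
    rw [← mul_assoc]; exact_mod_cast succ_mul_centralBinom_succ k
  simp only [hc, CharP.cast_eq_zero, zero_mul, zero_add]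
  simp only [show ∀ x y : K, 2 * x * (2 * y) = 4 * (x * y) by intros; ring, ← mul_sum,
    sum_antidiagonal_two_mul_add_one_mul_centralBinom]
  push_cast
  ring

theorem sum_antidiagonal_six_mul_add_one_mul_centralBinom (n : ℕ) :
    ∑ ij ∈ antidiagonal n,
        ((6 * ij.1 + 1) * ij.1.centralBinom * ((6 * ij.2 + 1) * ij.2.centralBinom) : K) =
      4 ^ n * ((9 * n ^ 2 + 3 * n + 2) / 2) := by
  have hsplit : ∀ ij ∈ antidiagonal n,
      ((6 * ij.1 + 1) * ij.1.centralBinom * ((6 * ij.2 + 1) * ij.2.centralBinom) : K) =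
        36 * (ij.1 * ij.1.centralBinom * (ij.2 * ij.2.centralBinom)) +
          (6 * n + 1) * (ij.1.centralBinom * ij.2.centralBinom) := by
    intro ij hij
    rw [← mem_antidiagonal.mp hij]
    push_cast
    ring
  rw [sum_congr rfl hsplit, sum_add_distrib, ← mul_sum, ← mul_sum,
    sum_antidiagonal_mul_centralBinom_mul_mul_centralBinom,
    sum_antidiagonal_centralBinom_mul_centralBinom]
  ring

end Nat

theorem sum_range_choose_mul_choose_mul_six_mul_add_one (k : ℕ) :
    ∑ j ∈ range (k + 1),
        ((2 * j).choose j : ℚ) * (2 * (k - j)).choose (k - j) * (6 * j + 1) *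
          (6 * (k - j : ℕ) + 1) =
      4 ^ k * ((9 * k ^ 2 + 3 * k + 2) / 2) := by
  rw [← Nat.sum_antidiagonal_six_mul_add_one_mul_centralBinom,
    Finset.Nat.sum_antidiagonal_eq_sum_range_succ
      (fun i j => ((6 * i + 1) * i.centralBinom * ((6 * j + 1) * j.centralBinom) : ℚ))]
  refine sum_congr rfl fun j _ => ?_
  simp only [Nat.centralBinom_eq_two_mul_choose]
  ring

theorem sum_range_neg_half_pow_mul (n : ℕ) :
    ∑ k ∈ range n, (-1 / 2 : ℚ) ^ k * ((9 * k ^ 2 + 3 * k + 2) / 2) =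
      -(-1 / 2 : ℚ) ^ n * (n * (3 * n - 1)) := by
  induction n with
  | zero => simp
  | succ n ih =>
    rw [sum_range_succ, ih, pow_succ]
    push_cast
    ring

theorem Rat.den_dvd_of_eq_intCast_div {q : ℚ} {m n : ℤ} (h : q = m / n) :
    (q.den : ℤ) ∣ n := by
  rw [h, ← Rat.divInt_eq_div]
  exact Rat.den_dvd m n

theorem coprime_den_neg_half_pow_mul_add_div_sq {p : ℕ} (hp : p.Prime) (hodd : Odd p) :
    Nat.Coprime ((-(-1 / 2 : ℚ) ^ p * (p * (3 * p - 1)) + p / 2) / p ^ 2).den p := by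
  obtain ⟨c, hc⟩ : (p : ℤ) ∣ 2 ^ (p - 1) - 1 := by
    refine (Int.ModEq.pow_card_sub_one_eq_one hp ?_).symm.dvd
    exact_mod_cast Nat.isCoprime_iff_coprime.mpr (Nat.coprime_two_left.mpr hodd)
  have hq : (-(-1 / 2 : ℚ) ^ p * (p * (3 * p - 1)) + p / 2) / p ^ 2 =
      ((3 + c : ℤ) : ℚ) / ((2 ^ p : ℕ) : ℤ) := by
    have hfermat : (2 : ℚ) ^ (p - 1) = 1 + p * c := by
      exact_mod_cast (by linarith : (2 : ℤ) ^ (p - 1) = 1 + p * c)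
    have htwo : (2 : ℚ) ^ p = 2 * (1 + p * c) := by
      rw [← hfermat, ← pow_succ', Nat.sub_add_cancel hp.one_le]
    have hneg : (-1 / 2 : ℚ) ^ p = -1 / 2 ^ p := by
      rw [neg_div, hodd.neg_pow, div_pow, one_pow, neg_div]
    have hp0 : (p : ℚ) ≠ 0 := Nat.cast_ne_zero.mpr hp.ne_zero
    have hc0 : (1 + p * c : ℚ) ≠ 0 := by
      rw [← hfermat]; positivity
    push_cast
    rw [hneg, htwo]
    field_simp
    ring
  exact Nat.Coprime.coprime_dvd_left
    (Int.natCast_dvd_natCast.mp (Rat.den_dvd_of_eq_intCast_div hq))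
    ((Nat.coprime_two_left.mpr hodd).pow_left p)

theorem stmt_5 (p : ℕ) (hp : p.Prime) (hodd : Odd p) :
    Nat.Coprime
      ((((∑ k ∈ Finset.range p, (-1 / 8 : ℚ) ^ k *
        ∑ j ∈ Finset.range (k + 1),
          ((2 * j).choose j : ℚ) * (2 * (k - j)).choose (k - j) * (6 * j + 1) * (6 * (k - j : ℕ) + 1))
        + p / 2) / p ^ 2 : ℚ).den) p := by
  have hsum : ∑ k ∈ range p, (-1 / 8 : ℚ) ^ k * ∑ j ∈ range (k + 1),
      ((2 * j).choose j : ℚ) * (2 * (k - j)).choose (k - j) * (6 * j + 1) *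
        (6 * (k - j : ℕ) + 1) =
          -(-1 / 2 : ℚ) ^ p * (p * (3 * p - 1)) := by
    have h (k : ℕ) : (-1 / 8 : ℚ) ^ k * 4 ^ k = (-1 / 2) ^ k := by
      rw [← mul_pow]; norm_num
    simp only [sum_range_choose_mul_choose_mul_six_mul_add_one, ← mul_assoc, h,
      sum_range_neg_half_pow_mul]
  rw [hsum]
  exact coprime_den_neg_half_pow_mul_add_div_sq hp hodd
end

section
/- In the ring of formal power series ℚ[[x]], the square of Σ_{j≥0} j * binom(2j,j) x^j equals Σ_{k≥0} (4^(k+1)(k+1)(k+2)/2) x^(k+2). -/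
/-!
Let `C = ∑ binom(2n,n) xⁿ`. The recurrence `(n+1) binom(2n+2,n+1) = 2(2n+1) binom(2n,n)` says
`(1 - 4x) C' = 2C`, from which `((1 - 4x) C²)' = 0`, so `C² = 1/(1 - 4x)` and `C' = 2C/(1 - 4x)`.
Hence `(x C')² = 4x² C²/(1 - 4x)² = 4x²/(1 - 4x)³`, whose coefficients are read off from
`1/(1 - y)³ = ∑ binom(n+2,2) yⁿ` at `y = 4x`.
-/

namespace PowerSeries

variable {R : Type*} [CommRing R]

theorem rescale_mk_one_pow_eq_mk_choose_add (a : R) (d : ℕ) :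
    rescale a (mk 1) ^ (d + 1) = mk fun n => a ^ n * Nat.choose (d + n) d := by
  rw [← map_pow, mk_one_pow_eq_mk_choose_add, rescale_mk]

theorem one_sub_C_mul_X_mul_rescale_mk_one (a : R) : (1 - C a * X) * rescale a (mk 1) = 1 := by
  rw [← rescale_X, ← map_one (rescale a), ← map_sub, ← map_mul, mul_comm,
    mk_one_mul_one_sub_eq_one, map_one]

theorem one_sub_four_X_mul_rescale_four_mk_one :
    (1 - 4 * X) * rescale 4 (mk 1) = (1 : R⟦X⟧) := by
  rw [show (4 : R⟦X⟧) = C 4 from (map_ofNat C 4).symm]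
  exact one_sub_C_mul_X_mul_rescale_mk_one 4

variable (R) in
noncomputable def centralBinomSeries : R⟦X⟧ :=
  mk fun n => (n.centralBinom : R)

theorem X_mul_derivative_centralBinomSeries :
    X * d⁄dX R (centralBinomSeries R) = mk fun n => (n * n.centralBinom : R) := by
  ext (_ | n)
  · simp
  · simp [coeff_derivative, centralBinomSeries, mul_comm]

theorem one_sub_four_X_mul_derivative_centralBinomSeries :
    (1 - 4 * X) * d⁄dX R (centralBinomSeries R) = 2 * centralBinomSeries R := by
  rw [show (4 : R⟦X⟧) = C 4 from (map_ofNat C 4).symm,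
    show (2 : R⟦X⟧) = C 2 from (map_ofNat C 2).symm]
  ext (_ | n)
  · simp only [sub_mul, one_mul, mul_assoc, map_sub, coeff_C_mul, coeff_zero_X_mul,
      coeff_derivative, centralBinomSeries, coeff_mk]
    norm_num [Nat.centralBinom]
  · have h := congrArg (Nat.cast : ℕ → R) (Nat.succ_mul_centralBinom_succ (n + 1))
    push_cast at h
    simp only [sub_mul, one_mul, mul_assoc, map_sub, coeff_C_mul, coeff_succ_X_mul,
      coeff_derivative, centralBinomSeries, coeff_mk]
    push_cast
    linear_combination h

theorem centralBinomSeries_sq [IsAddTorsionFree R] :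
    centralBinomSeries R ^ 2 = rescale 4 (mk 1) := by
  have h_prod : (1 - 4 * X) * centralBinomSeries R ^ 2 = 1 := by
    refine derivative.ext ?_ ?_
    · have h_four : d⁄dX R (4 : R⟦X⟧) = 0 := Derivation.map_natCast _ 4
      rw [derivative_one, Derivation.leibniz, derivative_pow]
      simp only [map_sub, derivative_one, derivative_X, h_four, Derivation.leibniz, smul_eq_mul]
      linear_combination
        2 * centralBinomSeries R * one_sub_four_X_mul_derivative_centralBinomSeries (R := R)
    · simp [centralBinomSeries]
  linear_combination rescale 4 (mk 1) * h_prod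
    - centralBinomSeries R ^ 2 * one_sub_four_X_mul_rescale_four_mk_one (R := R)

theorem derivative_centralBinomSeries [IsAddTorsionFree R] :
    d⁄dX R (centralBinomSeries R) = 2 * centralBinomSeries R * rescale 4 (mk 1) := by
  linear_combination rescale 4 (mk 1) * one_sub_four_X_mul_derivative_centralBinomSeries (R := R)
    - d⁄dX R (centralBinomSeries R) * one_sub_four_X_mul_rescale_four_mk_one (R := R)

end PowerSeries

open PowerSeries

theorem stmt_16 :
    (PowerSeries.mk fun j => (j : ℚ) * (2 * j).choose j) ^ 2
      = PowerSeries.X ^ 2 *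
        PowerSeries.mk (fun k => (4 : ℚ) ^ (k + 1) * (k + 1) * (k + 2) / 2) := by
  have h_cube : mk (fun k => (4 : ℚ) ^ (k + 1) * (k + 1) * (k + 2) / 2)
      = 4 * rescale 4 (mk 1) ^ 3 := by
    rw [rescale_mk_one_pow_eq_mk_choose_add, show (4 : ℚ⟦X⟧) = C 4 from (map_ofNat C 4).symm]
    ext k
    rw [coeff_C_mul, coeff_mk, coeff_mk, add_comm 2 k, Nat.cast_choose_two]
    push_cast
    ring
  have h_series : mk (fun j => (j : ℚ) * (2 * j).choose j) = X * d⁄dX ℚ (centralBinomSeries ℚ) :=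
    X_mul_derivative_centralBinomSeries.symm
  rw [h_series, h_cube, derivative_centralBinomSeries]
  linear_combination (4 * X ^ 2 * rescale 4 (mk 1) ^ 2 : ℚ⟦X⟧) * centralBinomSeries_sq (R := ℚ)
end

section
/- For every nonnegative integer k, 8 divides 4^k * k * (k-1), and Σ_{j=0}^k binom(2j,j)*binom(2k-2j,k-j)*(36 j (k-j)) = (9/2) * 4^k * k * (k-1) as integers (i.e., 2·LHS = 9·4^k·k·(k-1)). -/
/-!
Write `c n` for the central binomial coefficient. The recurrence `(n + 1) c (n + 1) = (4n + 2) c n`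
turns every convolution `∑_{i+j=k+1} i c i · g j` into `∑_{i+j=k} (4i + 2) c i · g j`, and the
symmetry `i ↔ j` of the antidiagonal gives `2 ∑_{i+j=k} i c i c j = k ∑_{i+j=k} c i c j`.
Together these yield `∑ c i c j = 4^k`, then `2 ∑ i c i c j = k 4^k`, and finally
`8 ∑ i c i · j c j = 4^k k (k - 1)` by induction on `k`.
-/

open Finset

namespace Nat

theorem sum_antidiagonal_succ_mul_centralBinom_mul (g : ℕ → ℕ) (k : ℕ) :
    ∑ p ∈ antidiagonal (k + 1), p.1 * centralBinom p.1 * g p.2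
      = 4 * ∑ p ∈ antidiagonal k, p.1 * centralBinom p.1 * g p.2
        + 2 * ∑ p ∈ antidiagonal k, centralBinom p.1 * g p.2 := by
  rw [Finset.Nat.sum_antidiagonal_succ, zero_mul, zero_mul, zero_add, mul_sum, mul_sum,
    ← sum_add_distrib]
  refine sum_congr rfl fun p _ => ?_
  rw [succ_mul_centralBinom_succ]
  ring

theorem sum_antidiagonal_centralBinom_mul_mul_centralBinom (k : ℕ) :
    ∑ p ∈ antidiagonal k, centralBinom p.1 * (p.2 * centralBinom p.2)
      = ∑ p ∈ antidiagonal k, p.1 * centralBinom p.1 * centralBinom p.2 := by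
  rw [← Finset.Nat.sum_antidiagonal_swap]
  exact sum_congr rfl fun p _ => by rw [Prod.fst_swap, Prod.snd_swap]; ring

theorem two_mul_sum_antidiagonal_mul_centralBinom_mul_centralBinom_eq_mul_sum (k : ℕ) :
    2 * ∑ p ∈ antidiagonal k, p.1 * centralBinom p.1 * centralBinom p.2
      = k * ∑ p ∈ antidiagonal k, centralBinom p.1 * centralBinom p.2 := by
  rw [two_mul]
  nth_rw 2 [← sum_antidiagonal_centralBinom_mul_mul_centralBinom]
  rw [← sum_add_distrib, mul_sum]
  refine sum_congr rfl fun p hp => ?_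
  rw [← mem_antidiagonal.mp hp]
  ring

theorem sum_antidiagonal_centralBinom_mul_centralBinom_s17 (k : ℕ) :
    ∑ p ∈ antidiagonal k, centralBinom p.1 * centralBinom p.2 = 4 ^ k := by
  induction k with
  | zero => simp
  | succ k ih =>
    refine Nat.eq_of_mul_eq_mul_left (by omega : 0 < k + 1) ?_
    rw [← two_mul_sum_antidiagonal_mul_centralBinom_mul_centralBinom_eq_mul_sum,
      sum_antidiagonal_succ_mul_centralBinom_mul, mul_add, mul_left_comm,
      two_mul_sum_antidiagonal_mul_centralBinom_mul_centralBinom_eq_mul_sum, ih]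
    ring

theorem two_mul_sum_antidiagonal_mul_centralBinom_mul_centralBinom (k : ℕ) :
    2 * ∑ p ∈ antidiagonal k, p.1 * centralBinom p.1 * centralBinom p.2 = k * 4 ^ k := by
  rw [two_mul_sum_antidiagonal_mul_centralBinom_mul_centralBinom_eq_mul_sum,
    sum_antidiagonal_centralBinom_mul_centralBinom_s17]

theorem eight_mul_sum_antidiagonal_mul_centralBinom_mul_mul_centralBinom (k : ℕ) :
    8 * ∑ p ∈ antidiagonal k, p.1 * centralBinom p.1 * (p.2 * centralBinom p.2)
      = 4 ^ k * k * (k - 1) := by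
  induction k with
  | zero => simp
  | succ k ih =>
    rw [sum_antidiagonal_succ_mul_centralBinom_mul (fun n => n * centralBinom n),
      sum_antidiagonal_centralBinom_mul_mul_centralBinom, mul_add, mul_left_comm, ih,
      mul_left_comm 8 2, show 8 = 4 * 2 by rfl, mul_assoc 4 2,
      two_mul_sum_antidiagonal_mul_centralBinom_mul_centralBinom]
    rcases k with _ | k
    · simp
    · simp only [add_tsub_cancel_right]
      ring

end Nat

theorem stmt_17 (k : ℕ) :
    8 ∣ 4 ^ k * k * (k - 1) ∧
    2 * ∑ j ∈ Finset.range (k + 1),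
        (2 * j).choose j * (2 * (k - j)).choose (k - j) * (36 * j * (k - j))
      = 9 * (4 ^ k * k * (k - 1)) := by
  have h := Nat.eight_mul_sum_antidiagonal_mul_centralBinom_mul_mul_centralBinom k
  rw [Finset.Nat.sum_antidiagonal_eq_sum_range_succ
    (fun i j => i * Nat.centralBinom i * (j * Nat.centralBinom j))] at h
  simp only [Nat.centralBinom_eq_two_mul_choose] at h
  refine ⟨⟨_, h.symm⟩, ?_⟩
  rw [← h, mul_sum, mul_sum, mul_sum]
  exact sum_congr rfl fun j _ => by ring
end
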